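/- Let K : ℝ → ℝ be continuous with support in [-τ, τ], ∫K = 1, and |K| ≤ B. For the Riemann-sum kernel smoother x̂(t) = (1/h)∑_{i=1}^n (∫_{s_{i-1}}^{s_i} K((t−u)/h)du)·x(t_i) with 0 = s₀ ≤ … ≤ s_n = 1, t_i ∈ [s_{i-1}, s_i], max_i (s_i − s_{i-1}) ≤ δ, and x : [0,1] → ℝ M-Lipschitz, one has |x̂(t) − (1/h)∫₀¹K((t−u)/h)x(u)du| ≤ 2τ B M δ / h·h = 2τBMδ for every t with [t−τh, t+τh] ⊆ [0,1]. Hence the Riemann-sum estimator differs from the continuous convolution by at most 2τBMδ. -/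

import Mathlib

open MeasureTheory Finset

/-!
Subtracting the integral from the Riemann sum cell by cell, the error is
`∑ᵢ ∫_{s_{i-1}}^{s_i} g(u) (x(tᵢ) - x(u)) du` with `g(u) = K((t - u)/h)`. On each cell the Lipschitz
bound gives `|x(tᵢ) - x(u)| ≤ Mδ`, so the error is at most `Mδ ‖g‖₁`, and rescaling gives
`‖g‖₁ = h ‖K‖₁ ≤ 2τBh`.
-/

theorem sum_Icc_one_eq_sum_range {β : Type*} [AddCommMonoid β] (f : ℕ → β) (n : ℕ) :
    ∑ i ∈ Icc 1 n, f i = ∑ i ∈ range n, f (i + 1) := by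
  rw [range_eq_Ico, sum_Ico_add', zero_add, Ico_add_one_right_eq_Icc]

theorem abs_sub_le_mul_of_mem_Icc {x : ℝ → ℝ} {M a b δ u w : ℝ} (hM : 0 ≤ M)
    (hx : ∀ u w, |x u - x w| ≤ M * |u - w|) (hab : b - a ≤ δ) (hu : u ∈ Set.Icc a b)
    (hw : w ∈ Set.Icc a b) : |x u - x w| ≤ M * δ :=
  (hx u w).trans <| mul_le_mul_of_nonneg_left
    ((abs_sub_le_of_le_of_le hu.1 hu.2 hw.1 hw.2).trans hab) hM

theorem abs_integral_mul_const_sub_integral_mul_le {g x : ℝ → ℝ} {a b c ε : ℝ} (hab : a ≤ b)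
    (hg : IntervalIntegrable g volume a b) (hx : ContinuousOn x (Set.uIcc a b))
    (hε : ∀ u ∈ Set.Icc a b, |x c - x u| ≤ ε) :
    |(∫ u in a..b, g u) * x c - ∫ u in a..b, g u * x u| ≤ ε * ∫ u in a..b, |g u| := by
  have hsplit : (∫ u in a..b, g u) * x c - ∫ u in a..b, g u * x u
      = ∫ u in a..b, g u * (x c - x u) := by
    simp only [mul_sub]
    rw [intervalIntegral.integral_sub (hg.mul_const _) (hg.mul_continuousOn hx),
      intervalIntegral.integral_mul_const]
  rw [hsplit, ← intervalIntegral.integral_const_mul ε fun u => |g u|]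
  refine intervalIntegral.norm_integral_le_of_norm_le (f := fun u => g u * (x c - x u)) hab
    (ae_of_all _ fun u hu => ?_) (hg.abs.const_mul ε)
  rw [Real.norm_eq_abs, abs_mul, mul_comm]
  exact mul_le_mul_of_nonneg_right (hε u (Set.Ioc_subset_Icc_self hu)) (abs_nonneg _)

theorem abs_riemannSum_sub_integral_mul_le {g x : ℝ → ℝ} {s c : ℕ → ℝ} {n : ℕ} {ε : ℝ}
    (hg : ∀ a b, IntervalIntegrable g volume a b) (hx : Continuous x)
    (hs : ∀ i < n, s i ≤ s (i + 1))
    (hε : ∀ i < n, ∀ u ∈ Set.Icc (s i) (s (i + 1)), |x (c i) - x u| ≤ ε) :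
    |∑ i ∈ range n, (∫ u in s i..s (i + 1), g u) * x (c i) - ∫ u in s 0..s n, g u * x u|
      ≤ ε * ∫ u in s 0..s n, |g u| := by
  rw [← intervalIntegral.sum_integral_adjacent_intervals
      fun i _ => (hg _ _).mul_continuousOn hx.continuousOn,
    ← intervalIntegral.sum_integral_adjacent_intervals fun i _ => (hg _ _).abs,
    mul_sum, ← sum_sub_distrib]
  exact (abs_sum_le_sum_abs _ _).trans <| sum_le_sum fun i hi =>
    abs_integral_mul_const_sub_integral_mul_le (hs i (mem_range.1 hi)) (hg _ _)
      hx.continuousOn (hε i (mem_range.1 hi))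

theorem integral_abs_le_of_forall_notMem_Icc {K : ℝ → ℝ} {a b B : ℝ} (hab : a ≤ b)
    (hK : ∀ v ∉ Set.Icc a b, K v = 0) (hB : ∀ v, |K v| ≤ B) :
    ∫ v, |K v| ≤ (b - a) * B := by
  rw [← setIntegral_eq_integral_of_forall_compl_eq_zero (s := Set.Icc a b)
    fun v hv => by simp [hK v hv]]
  have := norm_setIntegral_le_of_norm_le_const (f := fun v => |K v|)
    (measure_Icc_lt_top (a := a) (b := b) (μ := volume)) fun v _ => by simpa using hB v
  simpa [Real.volume_Icc, hab, mul_comm] using (le_abs_self _).trans this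

theorem integral_comp_sub_div {F : Type*} [NormedAddCommGroup F] [NormedSpace ℝ F]
    (f : ℝ → F) (t h : ℝ) : ∫ u, f ((t - u) / h) = |h| • ∫ v, f v := by
  rw [integral_sub_left_eq_self (fun u => f (u / h)) volume t, Measure.integral_comp_div]

theorem integral_abs_comp_sub_div_le {K : ℝ → ℝ} {τ B h : ℝ} (t : ℝ) (hτ : 0 ≤ τ) (hh : 0 ≤ h)
    (hK : ∀ v ∉ Set.Icc (-τ) τ, K v = 0) (hB : ∀ v, |K v| ≤ B) :
    ∫ u, |K ((t - u) / h)| ≤ h * (2 * τ * B) := by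
  rw [integral_comp_sub_div (fun v => |K v|), abs_of_nonneg hh, smul_eq_mul]
  gcongr
  simpa [two_mul] using integral_abs_le_of_forall_notMem_Icc (by linarith) hK hB

theorem riemann_sum_kernel_error_general (τ B M h δ : ℝ)
    (hτ : 0 < τ) (hM : 0 < M) (hh : 0 < h) (hδ : 0 < δ)
    (K : ℝ → ℝ) (hKcont : Continuous K)
    (hKsupp : ∀ v : ℝ, v ∉ Set.Icc (-τ) τ → K v = 0)
    (hKbdd : ∀ v : ℝ, |K v| ≤ B)
    (x : ℝ → ℝ) (hx : ∀ u w : ℝ, |x u - x w| ≤ M * |u - w|)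
    (n : ℕ) (s : ℕ → ℝ) (ti : ℕ → ℝ)
    (hs0 : s 0 = 0) (hsn : s n = 1)
    (hmono : ∀ i : ℕ, i < n → s i ≤ s (i + 1))
    (hmesh : ∀ i : ℕ, 1 ≤ i → i ≤ n → s i - s (i - 1) ≤ δ)
    (hti : ∀ i : ℕ, 1 ≤ i → i ≤ n → ti i ∈ Set.Icc (s (i - 1)) (s i))
    (t : ℝ) :
    |(1 / h) * ∑ i ∈ Finset.Icc 1 n, (∫ u in (s (i - 1))..(s i), K ((t - u) / h)) * x (ti i)
        - (1 / h) * ∫ u in (0:ℝ)..1, K ((t - u) / h) * x u|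
      ≤ 2 * τ * B * M * δ := by
  set g : ℝ → ℝ := fun u => K ((t - u) / h)
  have hKint : Integrable K :=
    hKcont.integrable_of_hasCompactSupport (HasCompactSupport.intro isCompact_Icc hKsupp)
  have hgint : Integrable g := (hKint.comp_div hh.ne').comp_sub_left t
  have hxc : Continuous x :=
    (LipschitzWith.of_dist_le_mul (K := M.toNNReal) fun u w => by
      simpa [Real.dist_eq, Real.coe_toNNReal M hM.le] using hx u w).continuous
  have hcell : ∀ i < n, ∀ u ∈ Set.Icc (s i) (s (i + 1)), |x (ti (i + 1)) - x u| ≤ M * δ := by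
    intro i hi u hu
    have hmesh' := hmesh (i + 1) (by omega) (by omega)
    have hti' := hti (i + 1) (by omega) (by omega)
    rw [Nat.add_sub_cancel] at hmesh' hti'
    exact abs_sub_le_mul_of_mem_Icc hM.le hx hmesh' hti' hu
  have hriemann := abs_riemannSum_sub_integral_mul_le (fun _ _ => hgint.intervalIntegrable)
    hxc hmono hcell
  rw [hs0, hsn] at hriemann
  have hL1 : ∫ u in (0:ℝ)..1, |g u| ≤ h * (2 * τ * B) := by
    rw [intervalIntegral.integral_of_le zero_le_one]
    exact (setIntegral_le_integral hgint.abs (ae_of_all _ fun _ => abs_nonneg _)).trans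
      (integral_abs_comp_sub_div_le t hτ.le hh.le hKsupp hKbdd)
  rw [← mul_sub, abs_mul, abs_of_pos (one_div_pos.2 hh), sum_Icc_one_eq_sum_range]
  simp only [Nat.add_sub_cancel]
  calc _ ≤ 1 / h * (M * δ * (h * (2 * τ * B))) := by gcongr; exact hriemann.trans (by gcongr)
    _ = 2 * τ * B * M * δ := by field_simp

theorem riemann_sum_kernel_error (τ B M h δ : ℝ)
    (hτ : 0 < τ) (hB : 0 < B) (hM : 0 < M) (hh : 0 < h) (hδ : 0 < δ)
    (K : ℝ → ℝ) (hKcont : Continuous K)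
    (hKsupp : ∀ v : ℝ, v ∉ Set.Icc (-τ) τ → K v = 0)
    (hKbdd : ∀ v : ℝ, |K v| ≤ B)
    (x : ℝ → ℝ) (hx : ∀ u w : ℝ, |x u - x w| ≤ M * |u - w|)
    (n : ℕ) (hn : 1 ≤ n) (s : ℕ → ℝ) (ti : ℕ → ℝ)
    (hs0 : s 0 = 0) (hsn : s n = 1)
    (hmono : ∀ i : ℕ, i < n → s i ≤ s (i + 1))
    (hmesh : ∀ i : ℕ, 1 ≤ i → i ≤ n → s i - s (i - 1) ≤ δ)
    (hti : ∀ i : ℕ, 1 ≤ i → i ≤ n → ti i ∈ Set.Icc (s (i - 1)) (s i))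
    (t : ℝ) (ht : Set.Icc (t - τ * h) (t + τ * h) ⊆ Set.Icc (0:ℝ) 1) :
    |(1 / h) * ∑ i ∈ Finset.Icc 1 n, (∫ u in (s (i - 1))..(s i), K ((t - u) / h)) * x (ti i)
        - (1 / h) * ∫ u in (0:ℝ)..1, K ((t - u) / h) * x u|
      ≤ 2 * τ * B * M * δ :=
  riemann_sum_kernel_error_general τ B M h δ hτ hM hh hδ K hKcont hKsupp hKbdd x hx n s ti hs0 hsn
    hmono hmesh hti t
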